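/- arXiv:2503.07775 — 6 statements merged into one kernel-verified Lean document; each statement's English description precedes it below -/
import Mathlib

section
/- Let f : ℝ → ℝ be a nondecreasing ℓ-bi-Lipschitz function and let f̂ be a nondecreasing function satisfying |f̂(x) − f(x)| ≤ ε for all x. Define ĝ(y) = inf {x : f̂(x) ≥ y}. Then for every y in the range of f, |ĝ(y) − f⁻¹(y)| ≤ ℓ·ε, where f⁻¹(y) = inf {x : f(x) ≥ y} is the pseudoinverse of f. -/
/-- If `f` is a nondecreasing ℓ-bi-Lipschitz function and `fhat` is a
nondecreasing function with `|fhat x − f x| ≤ ε` for all `x`, then the pseudoinverse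
`ghat y = inf {x : fhat x ≥ y}` satisfies `|ghat y − finv y| ≤ ℓ·ε` for every `y` in the
range of `f`, where `finv y = inf {x : f x ≥ y}`. -/
theorem pseudoinverse_approximation
    (f fhat : ℝ → ℝ) (ℓ ε : ℝ) (hℓ : 1 ≤ ℓ) (hε : 0 ≤ ε)
    (hfmono : Monotone f) (hfhatmono : Monotone fhat)
    (hlow : ∀ a b : ℝ, (1 / ℓ) * |a - b| ≤ |f a - f b|)
    (hup : ∀ a b : ℝ, |f a - f b| ≤ ℓ * |a - b|)
    (happrox : ∀ x : ℝ, |fhat x - f x| ≤ ε) :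
    ∀ y ∈ Set.range f,
      |sInf {x : ℝ | y ≤ fhat x} - sInf {x : ℝ | y ≤ f x}| ≤ ℓ * ε := by
  rintro y ⟨x0, rfl⟩
  have hℓ0 : (0:ℝ) < ℓ := lt_of_lt_of_le one_pos hℓ
  have hinj : Function.Injective f := by
    intro a b hab
    by_contra hne
    have h1 : (0:ℝ) < (1/ℓ) * |a - b| :=
      mul_pos (by positivity) (abs_pos.mpr (sub_ne_zero.mpr hne))
    have := hlow a b
    rw [hab, sub_self, abs_zero] at this
    linarith
  have hstrict : StrictMono f := hfmono.strictMono_of_injective hinj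
  -- gap lemma: f (x + ℓε) ≥ f x + ε and f (x - ℓε) ≤ f x - ε
  have gap : ∀ x : ℝ, f x + ε ≤ f (x + ℓ * ε) := by
    intro x
    have h := hlow (x + ℓ * ε) x
    have habs : |x + ℓ * ε - x| = ℓ * ε := by
      rw [add_sub_cancel_left, abs_of_nonneg (by positivity)]
    have hmono : f x ≤ f (x + ℓ * ε) := hfmono (by nlinarith)
    rw [habs, abs_of_nonneg (by linarith)] at h
    have : (1/ℓ) * (ℓ * ε) = ε := by field_simp
    linarith [this ▸ h]
  have gap' : ∀ x : ℝ, f (x - ℓ * ε) ≤ f x - ε := by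
    intro x
    have := gap (x - ℓ * ε)
    rw [sub_add_cancel] at this
    linarith
  -- the exact inverse: sInf {x | f x0 ≤ f x} = x0
  have hexact : sInf {x : ℝ | f x0 ≤ f x} = x0 := by
    have : {x : ℝ | f x0 ≤ f x} = Set.Ici x0 := by
      ext x; simpa using hstrict.le_iff_le
    rw [this, csInf_Ici]
  rw [hexact]
  -- membership: x0 + ℓε ∈ S
  have hmem : x0 + ℓ * ε ∈ {x : ℝ | f x0 ≤ fhat x} := by
    have h1 := gap x0
    have h2 := happrox (x0 + ℓ * ε)
    rw [abs_le] at h2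
    simp only [Set.mem_setOf_eq]
    linarith [h2.1]
  -- lower bound for S
  have hlb : ∀ x ∈ {x : ℝ | f x0 ≤ fhat x}, x0 - ℓ * ε ≤ x := by
    intro x hx
    have h2 := happrox x
    rw [abs_le] at h2
    have hfx : f x0 - ε ≤ f x := by
      simp only [Set.mem_setOf_eq] at hx
      linarith [h2.2]
    have := gap' x0
    exact hstrict.le_iff_le.mp (le_trans this hfx)
  have hbdd : BddBelow {x : ℝ | f x0 ≤ fhat x} := ⟨x0 - ℓ * ε, hlb⟩
  have hne : {x : ℝ | f x0 ≤ fhat x}.Nonempty := ⟨_, hmem⟩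
  have h1 : sInf {x : ℝ | f x0 ≤ fhat x} ≤ x0 + ℓ * ε := csInf_le hbdd hmem
  have h2 : x0 - ℓ * ε ≤ sInf {x : ℝ | f x0 ≤ fhat x} := le_csInf hne hlb
  rw [abs_le]
  constructor <;> linarith
end

section
/- Let μ and ν be probability measures on ℝ with cumulative distribution functions Q_μ and Q_ν. Then the first Wasserstein distance satisfies W₁(μ, ν) = ∫_ℝ |Q_μ(t) − Q_ν(t)| dt. -/
open MeasureTheory ENNReal ProbabilityTheory

/-!
For `(Z₁, Z₂) ∼ π`, Tonelli gives `E|Z₁ - Z₂| = ∫ P(Z₁ ≤ t < Z₂ or Z₂ ≤ t < Z₁) dt`, since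
`|x - y|` is the length of the interval between `x` and `y`. For each `t` the integrand is at least
`|Q_μ(t) - Q_ν(t)|`, the difference of the masses of `{Z₁ ≤ t}` and `{Z₂ ≤ t}`. The comonotone
coupling `(Q_μ⁻¹(U), Q_ν⁻¹(U))`, `U` uniform on `(0, 1)`, turns these events into the nested
intervals `{U ≤ Q_μ(t)}` and `{U ≤ Q_ν(t)}`, so it attains equality for every `t`.
-/

/-- A coupling of two measures on ℝ. -/
def IsCoupling (π : Measure (ℝ × ℝ)) (μ ν : Measure ℝ) : Prop :=
  π.map Prod.fst = μ ∧ π.map Prod.snd = ν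

/-- The first Wasserstein distance, as infimum over couplings of `∫ |x−y| dπ`. -/
noncomputable def wasserstein1 (μ ν : Measure ℝ) : ℝ≥0∞ :=
  ⨅ π ∈ {π : Measure (ℝ × ℝ) | IsCoupling π μ ν},
    ∫⁻ z, ENNReal.ofReal |z.1 - z.2| ∂π

open Set
open scoped symmDiff

theorem volume_Ici_symmDiff_Ici (x y : ℝ) :
    volume (Ici x ∆ Ici y) = ENNReal.ofReal |x - y| := by
  wlog hxy : x ≤ y generalizing x y
  · rw [symmDiff_comm, abs_sub_comm]
    exact this y x (le_of_not_ge hxy)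
  rw [symmDiff_of_ge (Ici_subset_Ici.2 hxy), Ici_sdiff_Ici, Real.volume_Ico, abs_sub_comm,
    abs_of_nonneg (sub_nonneg.2 hxy)]

theorem lintegral_ofReal_abs_sub_eq_lintegral_measure_symmDiff (P : Measure (ℝ × ℝ))
    [SFinite P] :
    ∫⁻ z, ENNReal.ofReal |z.1 - z.2| ∂P = ∫⁻ t, P ({z | z.1 ≤ t} ∆ {z | z.2 ≤ t}) := by
  let E : Set ((ℝ × ℝ) × ℝ) := {p | p.1.1 ≤ p.2} ∆ {p | p.1.2 ≤ p.2}
  have hE : MeasurableSet E :=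
    (measurableSet_le (by fun_prop) (by fun_prop)).symmDiff
      (measurableSet_le (by fun_prop) (by fun_prop))
  calc ∫⁻ z, ENNReal.ofReal |z.1 - z.2| ∂P
      = ∫⁻ z, volume (Prod.mk z ⁻¹' E) ∂P := by
        simp_rw [← volume_Ici_symmDiff_Ici]; rfl
    _ = P.prod volume E := (Measure.prod_apply hE).symm
    _ = ∫⁻ t, P ((·, t) ⁻¹' E) := Measure.prod_apply_symm hE

theorem IsCoupling.isProbabilityMeasure {π : Measure (ℝ × ℝ)} {μ ν : Measure ℝ}
    [IsProbabilityMeasure μ] (h : IsCoupling π μ ν) : IsProbabilityMeasure π where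
  measure_univ := by
    rw [← preimage_univ (f := Prod.fst), ← Measure.map_apply measurable_fst .univ, h.1,
      measure_univ]

theorem ofReal_abs_measureReal_sub_le_measure_symmDiff {α : Type*} [MeasurableSpace α]
    (P : Measure α) [IsFiniteMeasure P] (A B : Set α) :
    ENNReal.ofReal |P.real A - P.real B| ≤ P (A ∆ B) := by
  wlog hBA : P.real B ≤ P.real A generalizing A B
  · rw [abs_sub_comm, symmDiff_comm]
    exact this B A (le_of_not_ge hBA)
  rw [abs_of_nonneg (sub_nonneg.2 hBA), ENNReal.ofReal_sub _ measureReal_nonneg,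
    ofReal_measureReal, ofReal_measureReal]
  exact le_measure_symmDiff

theorem IsCoupling.ofReal_abs_cdf_sub_le {π : Measure (ℝ × ℝ)} {μ ν : Measure ℝ}
    [IsProbabilityMeasure μ] [IsProbabilityMeasure ν] (h : IsCoupling π μ ν) (t : ℝ) :
    ENNReal.ofReal |cdf μ t - cdf ν t| ≤ π ({z | z.1 ≤ t} ∆ {z | z.2 ≤ t}) := by
  have := h.isProbabilityMeasure
  rw [cdf_eq_real, cdf_eq_real, ← h.1, ← h.2,
    map_measureReal_apply measurable_fst measurableSet_Iic,
    map_measureReal_apply measurable_snd measurableSet_Iic]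
  exact ofReal_abs_measureReal_sub_le_measure_symmDiff π _ _

namespace StieltjesFunction

noncomputable def quantile (F : StieltjesFunction ℝ) (u : ℝ) : ℝ := sInf {x | u ≤ F x}

variable {F : StieltjesFunction ℝ} {u : ℝ}

theorem bddBelow_setOf_le_apply (hlow : ∃ x, F x < u) : BddBelow {x | u ≤ F x} := by
  obtain ⟨x₀, hx₀⟩ := hlow
  exact ⟨x₀, fun x hx ↦ (F.mono.reflect_lt (hx₀.trans_le hx)).le⟩

theorem le_apply_quantile (hhigh : ∃ x, u ≤ F x) : u ≤ F (F.quantile u) := by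
  refine ge_of_tendsto ((F.right_continuous _).mono_left (nhdsWithin_mono _ Ioi_subset_Ici_self))
    ?_
  filter_upwards [self_mem_nhdsWithin] with y hy
  obtain ⟨x, hx, hxy⟩ := exists_lt_of_csInf_lt hhigh hy
  exact le_trans hx (F.mono hxy.le)

theorem quantile_le_iff (hlow : ∃ x, F x < u) (hhigh : ∃ x, u ≤ F x) (x : ℝ) :
    F.quantile u ≤ x ↔ u ≤ F x :=
  ⟨fun h ↦ (le_apply_quantile hhigh).trans (F.mono h),
    fun h ↦ csInf_le (bddBelow_setOf_le_apply hlow) h⟩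

end StieltjesFunction

theorem quantile_cdf_le_iff (μ : Measure ℝ) [IsProbabilityMeasure μ] {u : ℝ}
    (hu : u ∈ Ioo 0 1) (x : ℝ) : (cdf μ).quantile u ≤ x ↔ u ≤ cdf μ x :=
  StieltjesFunction.quantile_le_iff
    ((tendsto_cdf_atBot μ).eventually (eventually_lt_nhds hu.1)).exists
    ((tendsto_cdf_atTop μ).eventually (eventually_ge_nhds hu.2)).exists x

theorem monotoneOn_quantile_cdf (μ : Measure ℝ) [IsProbabilityMeasure μ] :
    MonotoneOn (cdf μ).quantile (Ioo 0 1) := fun _u hu _v hv huv ↦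
  (quantile_cdf_le_iff μ hu _).2 (huv.trans ((quantile_cdf_le_iff μ hv _).1 le_rfl))

theorem preimage_quantile_cdf_Iic_inter_Ioo (μ : Measure ℝ) [IsProbabilityMeasure μ] (x : ℝ) :
    (cdf μ).quantile ⁻¹' Iic x ∩ Ioo 0 1 = Iic (cdf μ x) ∩ Ioo 0 1 := by
  ext u
  exact and_congr_left (quantile_cdf_le_iff μ · x)

theorem aemeasurable_quantile_cdf (μ : Measure ℝ) [IsProbabilityMeasure μ] :
    AEMeasurable (cdf μ).quantile (volume.restrict (Ioo 0 1)) :=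
  aemeasurable_restrict_of_monotoneOn measurableSet_Ioo (monotoneOn_quantile_cdf μ)

theorem volume_restrict_Ioo_Iic {a : ℝ} (ha : a ∈ Icc 0 1) :
    volume.restrict (Ioo 0 1) (Iic a) = ENNReal.ofReal a := by
  rw [Measure.restrict_congr_set Ioo_ae_eq_Ioc, Measure.restrict_apply measurableSet_Iic,
    Iic_inter_Ioc_of_le ha.2, Real.volume_Ioc, sub_zero]

theorem volume_restrict_Ioo_Iic_symmDiff_Iic {a b : ℝ} (ha : a ∈ Icc 0 1) (hb : b ∈ Icc 0 1) :
    volume.restrict (Ioo 0 1) (Iic a ∆ Iic b) = ENNReal.ofReal |a - b| := by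
  wlog hba : b ≤ a generalizing a b
  · rw [symmDiff_comm, abs_sub_comm]
    exact this hb ha (le_of_not_ge hba)
  have hsub : Iic b ⊆ Iic a := Iic_subset_Iic.2 hba
  rw [symmDiff_of_ge hsub, measure_sdiff hsub measurableSet_Iic.nullMeasurableSet
      (by rw [volume_restrict_Ioo_Iic hb]; exact ofReal_ne_top),
    volume_restrict_Ioo_Iic ha, volume_restrict_Ioo_Iic hb, ← ENNReal.ofReal_sub _ hb.1,
    abs_of_nonneg (sub_nonneg.2 hba)]

theorem map_quantile_cdf (μ : Measure ℝ) [IsProbabilityMeasure μ] :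
    (volume.restrict (Ioo 0 1)).map (cdf μ).quantile = μ := by
  refine Measure.ext_of_Iic _ _ fun x ↦ ?_
  rw [Measure.map_apply_of_aemeasurable (aemeasurable_quantile_cdf μ) measurableSet_Iic,
    Measure.restrict_apply' measurableSet_Ioo, preimage_quantile_cdf_Iic_inter_Ioo,
    ← Measure.restrict_apply' measurableSet_Ioo,
    volume_restrict_Ioo_Iic ⟨cdf_nonneg μ x, cdf_le_one μ x⟩, ofReal_cdf]

noncomputable def quantileCoupling (μ ν : Measure ℝ) : Measure (ℝ × ℝ) :=
  (volume.restrict (Ioo 0 1)).map fun u ↦ ((cdf μ).quantile u, (cdf ν).quantile u)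

section QuantileCoupling

variable (μ ν : Measure ℝ) [IsProbabilityMeasure μ] [IsProbabilityMeasure ν]

theorem aemeasurable_quantile_cdf_prod :
    AEMeasurable (fun u ↦ ((cdf μ).quantile u, (cdf ν).quantile u)) (volume.restrict (Ioo 0 1)) :=
  (aemeasurable_quantile_cdf μ).prodMk (aemeasurable_quantile_cdf ν)

theorem isCoupling_quantileCoupling : IsCoupling (quantileCoupling μ ν) μ ν :=
  ⟨by rw [quantileCoupling, AEMeasurable.map_map_of_aemeasurable measurable_fst.aemeasurable
      (aemeasurable_quantile_cdf_prod μ ν)]; exact map_quantile_cdf μ,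
    by rw [quantileCoupling, AEMeasurable.map_map_of_aemeasurable measurable_snd.aemeasurable
      (aemeasurable_quantile_cdf_prod μ ν)]; exact map_quantile_cdf ν⟩

theorem quantileCoupling_symmDiff (t : ℝ) :
    quantileCoupling μ ν ({z | z.1 ≤ t} ∆ {z | z.2 ≤ t}) = ENNReal.ofReal |cdf μ t - cdf ν t| := by
  rw [quantileCoupling, Measure.map_apply_of_aemeasurable (aemeasurable_quantile_cdf_prod μ ν)
      ((measurableSet_le measurable_fst measurable_const).symmDiff
        (measurableSet_le measurable_snd measurable_const)),
    Measure.restrict_apply' measurableSet_Ioo, preimage_symmDiff, inter_symmDiff_distrib_right]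
  change volume (((cdf μ).quantile ⁻¹' Iic t ∩ _) ∆ ((cdf ν).quantile ⁻¹' Iic t ∩ _)) = _
  rw [preimage_quantile_cdf_Iic_inter_Ioo, preimage_quantile_cdf_Iic_inter_Ioo,
    ← inter_symmDiff_distrib_right, ← Measure.restrict_apply' measurableSet_Ioo,
    volume_restrict_Ioo_Iic_symmDiff_Iic ⟨cdf_nonneg μ t, cdf_le_one μ t⟩
      ⟨cdf_nonneg ν t, cdf_le_one ν t⟩]

end QuantileCoupling

/-- for probability measures on ℝ, the first Wasserstein distance equals the
integral of the absolute difference of the cumulative distribution functions: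
`W₁(μ, ν) = ∫ |Q_μ(t) − Q_ν(t)| dt`. -/
theorem wasserstein1_eq_integral_abs_cdf_sub
    (μ ν : Measure ℝ) [IsProbabilityMeasure μ] [IsProbabilityMeasure ν] :
    wasserstein1 μ ν = ∫⁻ t, ENNReal.ofReal |cdf μ t - cdf ν t| := by
  refine le_antisymm ?_ (le_iInf₂ fun π hπ ↦ ?_)
  · have hπ₀ := isCoupling_quantileCoupling μ ν
    have := hπ₀.isProbabilityMeasure
    refine (iInf₂_le (quantileCoupling μ ν) hπ₀).trans_eq ?_
    rw [lintegral_ofReal_abs_sub_eq_lintegral_measure_symmDiff]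
    simp_rw [quantileCoupling_symmDiff]
  · have := hπ.isProbabilityMeasure
    rw [lintegral_ofReal_abs_sub_eq_lintegral_measure_symmDiff]
    exact lintegral_mono hπ.ofReal_abs_cdf_sub_le
end

section
/- In the Misra–Gries setting with k counters and k* = k/2, suppose the per-item error bound 0 ≤ f_j − f̂_j ≤ 4·F^res(k/4)/k holds, where F^res(τ) is the sum of frequencies of all items except the τ most frequent. Then the cumulant estimate Ĉ_i = Σ_{j ≤ i} f̂_j satisfies 0 ≤ C_i − Ĉ_i ≤ 2·F^res(k/4) for every i, where C_i = Σ_{j ≤ i} f_j is the true cumulant (with respect to a total order on the universe). -/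
/-- in the Misra–Gries setting with `k` counters, if each per-item error
satisfies `0 ≤ f j − f̂ j ≤ 4·R/k` where `R = F^res(k/4)` is the total frequency outside
the set `T` of the `k/4` most frequent items, then the cumulant estimates (w.r.t. a total
order on the universe) satisfy `0 ≤ C i − Ĉ i ≤ 2·R` for every `i`. -/
theorem cumulant_estimate_error
    (ι : Type) [Fintype ι] [LinearOrder ι]
    (k : ℕ) (hk : 0 < k)
    (f fhat : ι → ℝ)
    (hf0 : ∀ j, 0 ≤ f j) (hfhat0 : ∀ j, 0 ≤ fhat j)
    (T : Finset ι) (hTcard : T.card = k / 4)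
    (hTtop : ∀ i ∈ T, ∀ j ∉ T, f j ≤ f i)
    (R : ℝ) (hR : R = ∑ j ∈ Tᶜ, f j)
    (herr : ∀ j, 0 ≤ f j - fhat j ∧ f j - fhat j ≤ 4 * R / k) :
    ∀ i : ι,
      0 ≤ (∑ j ∈ Finset.univ.filter (· ≤ i), f j) -
            (∑ j ∈ Finset.univ.filter (· ≤ i), fhat j) ∧
      (∑ j ∈ Finset.univ.filter (· ≤ i), f j) -
            (∑ j ∈ Finset.univ.filter (· ≤ i), fhat j) ≤ 2 * R := by
  intro i
  set S := Finset.univ.filter (· ≤ i) with hS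
  have hR0 : 0 ≤ R := hR ▸ Finset.sum_nonneg (fun j _ => hf0 j)
  have hsum : (∑ j ∈ S, f j) - (∑ j ∈ S, fhat j) = ∑ j ∈ S, (f j - fhat j) := by
    rw [Finset.sum_sub_distrib]
  constructor
  · rw [hsum]
    exact Finset.sum_nonneg (fun j _ => (herr j).1)
  · rw [hsum, ← Finset.sum_filter_add_sum_filter_not S (· ∈ T)]
    have h1 : ∑ j ∈ S.filter (· ∈ T), (f j - fhat j) ≤ R := by
      calc ∑ j ∈ S.filter (· ∈ T), (f j - fhat j)
          ≤ ∑ _j ∈ S.filter (· ∈ T), (4 * R / k) :=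
            Finset.sum_le_sum (fun j _ => (herr j).2)
        _ = (S.filter (· ∈ T)).card * (4 * R / k) := by
            rw [Finset.sum_const, nsmul_eq_mul]
        _ ≤ (k / 4 : ℕ) * (4 * R / k) := by
            apply mul_le_mul_of_nonneg_right
            · exact_mod_cast le_trans
                (Finset.card_le_card (Finset.filter_subset_filter _ (Finset.filter_subset _ _)
                  |>.trans (by simp [Finset.filter_subset]))) (le_of_eq hTcard)
            · positivity
        _ ≤ R := by
            rw [div_eq_mul_inv, ← mul_assoc]
            have hk4 : ((k / 4 : ℕ) : ℝ) * 4 ≤ (k : ℝ) := by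
              exact_mod_cast Nat.div_mul_le_self k 4
            calc ((k / 4 : ℕ) : ℝ) * (4 * R) * (k : ℝ)⁻¹
                = ((k / 4 : ℕ) : ℝ) * 4 * (k : ℝ)⁻¹ * R := by ring
              _ ≤ (k : ℝ) * (k : ℝ)⁻¹ * R := by
                  apply mul_le_mul_of_nonneg_right _ hR0
                  exact mul_le_mul_of_nonneg_right hk4 (by positivity)
              _ = R := by
                  rw [mul_inv_cancel₀ (by exact_mod_cast hk.ne'), one_mul]
    have h2 : ∑ j ∈ S.filter (· ∉ T), (f j - fhat j) ≤ R := by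
      calc ∑ j ∈ S.filter (· ∉ T), (f j - fhat j)
          ≤ ∑ j ∈ S.filter (· ∉ T), f j :=
            Finset.sum_le_sum (fun j _ => by have := hfhat0 j; linarith)
        _ ≤ ∑ j ∈ Tᶜ, f j := by
            apply Finset.sum_le_sum_of_subset_of_nonneg _ (fun j _ _ => hf0 j)
            intro j hj
            simp only [Finset.mem_filter] at hj
            simpa using hj.2
        _ = R := hR.symm
    linarith
end

section
/- Let f_j ≥ 0 be the true frequencies with Σ_j f_j = n, and let f̂_j be estimates with 0 ≤ f_j − f̂_j. Define the normalized PDF estimate p̂(i) = f̂_i / max_j Ĉ_j where Ĉ_j are cumulant estimates satisfying n − 2R ≤ max_j Ĉ_j ≤ n (with R = F^res(k/4) and 2R ≤ n/2), and let p(i) = f_i/n. Then |p(i) − p̂(i)| ≤ max{ (4R/n)·(f_i/n), (f_i − f̂_i)/n } for each i; in particular, if f_i − f̂_i ≤ 4R/k, then |p(i) − p̂(i)| ≤ 4R/n. -/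
/-- with true frequencies `f j ≥ 0` summing to `n`, estimates
`0 ≤ f̂ j ≤ f j`, normalizer `M = max_j Ĉ j` satisfying `n − 2R ≤ M ≤ n` (with
`2R ≤ n/2`), the normalized PDF estimate `p̂ i = f̂ i / M` satisfies
`|p i − p̂ i| ≤ max{(4R/n)·(f i/n), (f i − f̂ i)/n}` where `p i = f i / n`; in
particular, if moreover `f i − f̂ i ≤ 4R/k` for `k ≥ 1`, then `|p i − p̂ i| ≤ 4R/n`. -/
theorem pdf_estimate_error
    (ι : Type) [Fintype ι]
    (f fhat : ι → ℝ) (n R M k : ℝ)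
    (hn : 0 < n) (hR : 0 ≤ R) (h2R : 2 * R ≤ n / 2) (hk : 1 ≤ k)
    (hf0 : ∀ j, 0 ≤ f j) (hfhat0 : ∀ j, 0 ≤ fhat j) (hfhatle : ∀ j, fhat j ≤ f j)
    (hsum : (∑ j, f j) = n)
    (hMlb : n - 2 * R ≤ M) (hMub : M ≤ n) :
    ∀ i : ι,
      |f i / n - fhat i / M| ≤ max ((4 * R / n) * (f i / n)) ((f i - fhat i) / n) ∧
      (f i - fhat i ≤ 4 * R / k → |f i / n - fhat i / M| ≤ 4 * R / n) := by
  intro i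
  have hn2R : 0 < n - 2 * R := by linarith
  have hM0 : 0 < M := by linarith
  have hfi_le : f i ≤ n := by
    rw [← hsum]
    exact Finset.single_le_sum (fun j _ => hf0 j) (Finset.mem_univ i)
  -- upper bound
  have hb1 : f i / n - fhat i / M ≤ (f i - fhat i) / n := by
    have e2 : fhat i / n ≤ fhat i / M :=
      div_le_div_of_nonneg_left (hfhat0 i) hM0 hMub
    have e1 : (f i - fhat i) / n = f i / n - fhat i / n := sub_div _ _ _
    linarith
  -- lower bound
  have hb2 : -(4 * R / n * (f i / n)) ≤ f i / n - fhat i / M := by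
    have e2 : fhat i / M ≤ f i / M :=
      div_le_div_of_nonneg_right (hfhatle i) hM0.le
    have e3 : f i / M ≤ f i / (n - 2 * R) :=
      div_le_div_of_nonneg_left (hf0 i) hn2R hMlb
    have e4 : f i / (n - 2 * R) ≤ f i / n + 4 * R / n * (f i / n) := by
      rw [div_le_iff₀ hn2R]
      have expand : (f i / n + 4 * R / n * (f i / n)) * (n - 2 * R)
          = f i + 2 * R * f i * (n - 4 * R) / (n * n) := by
        field_simp
        ring
      have hpos : 0 ≤ 2 * R * f i * (n - 4 * R) / (n * n) :=
        div_nonneg (mul_nonneg (mul_nonneg (by positivity) (hf0 i)) (by linarith))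
          (by positivity)
      linarith
    linarith
  have hmax : |f i / n - fhat i / M| ≤ max ((4 * R / n) * (f i / n)) ((f i - fhat i) / n) := by
    rw [abs_le]
    constructor
    · calc -(max ((4 * R / n) * (f i / n)) ((f i - fhat i) / n))
          ≤ -(4 * R / n * (f i / n)) := by
            exact neg_le_neg (le_max_left _ _)
      _ ≤ _ := hb2
    · exact hb1.trans (le_max_right _ _)
  refine ⟨hmax, fun hdiff => ?_⟩
  apply hmax.trans
  apply max_le
  · have : f i / n ≤ 1 := by rw [div_le_one hn]; exact hfi_le
    have h4R : 0 ≤ 4 * R / n := by positivity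
    calc 4 * R / n * (f i / n) ≤ 4 * R / n * 1 := by
          apply mul_le_mul_of_nonneg_left this h4R
      _ = 4 * R / n := mul_one _
  · have hkn : 4 * R / k ≤ 4 * R := by
      calc 4 * R / k ≤ 4 * R / 1 := div_le_div_of_nonneg_left (by linarith) one_pos hk
        _ = 4 * R := div_one _
    exact (div_le_div_iff_of_pos_right hn).mpr (by linarith)
end

section
/- Let μ be a probability measure on ℝ with density p that is ℓ-Lipschitz and satisfies the sub-Gaussian tail bound ℙ_{X∼μ}[|X| ≥ t] ≤ 2exp(−t²/σ²). If the bucket width is chosen as b = ε/(σ·ℓ·√(log(2/ε))) (up to an absolute constant), then the piecewise-constant bucketed measure μ_b restricted to the interval [−T, T] with T = σ·√(log(2/ε)) satisfies TV(μ, μ_b) ≤ ε, where outside [−T,T] the bucketed measure is taken to be zero (with the remaining mass at most ε/2 accounted as TV error). -/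
/-!
Split `∫ |p - p_b|` at `[-T, T]`. Outside, `p_b = 0` and the error is the tail mass
`μ {|x| ≥ T} ≤ 2 exp (-T² / σ²) = ε`. Inside, the average of an `ℓ`-Lipschitz function over an
interval of length `b` is within `ℓ b` of each of its values, so the error is at most
`2T · ℓ b`, which is `ε` for `c = 1/2`.
-/

open MeasureTheory Set

section Average

variable {α : Type*} [MeasurableSpace α] {μ : Measure α}

lemma abs_sub_setAverage_le {f : α → ℝ} {s : Set α} (hs : MeasurableSet s) (h0 : μ s ≠ 0)
    (hfin : μ s ≠ ⊤) (hf : IntegrableOn f s μ) {x : α} {C : ℝ}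
    (hC : ∀ t ∈ s, |f x - f t| ≤ C) : |f x - ⨍ t in s, f t ∂μ| ≤ C := by
  have hmem : ⨍ t in s, f t ∂μ ∈ Icc (f x - C) (f x + C) :=
    (convex_Icc _ _).set_average_mem isClosed_Icc h0 hfin
      (ae_restrict_of_forall_mem hs fun t ht => by
        have := abs_le.1 (hC t ht); constructor <;> linarith) hf
  exact abs_sub_le_iff.2 ⟨by linarith [hmem.1], by linarith [hmem.2]⟩

lemma integral_abs_sub_le_of_abs_sub_le_on {p q : α → ℝ} {s : Set α} (hs : MeasurableSet s)
    (hsfin : μ s ≠ ⊤) (hp : Integrable p μ) (hq : AEStronglyMeasurable q μ)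
    (hq0 : ∀ x ∉ s, q x = 0) {δ : ℝ} (hδ : ∀ x ∈ s, |p x - q x| ≤ δ) :
    ∫ x, |p x - q x| ∂μ ≤ δ * μ.real s + ∫ x in sᶜ, |p x| ∂μ := by
  have hδs : IntegrableOn (fun _ => δ) s μ := integrableOn_const hsfin
  have hdom : ∀ x, |p x - q x| ≤ |p x| + s.indicator (fun _ => δ) x := by
    intro x
    by_cases hx : x ∈ s
    · rw [indicator_of_mem hx]; linarith [hδ x hx, abs_nonneg (p x)]
    · rw [indicator_of_notMem hx, hq0 x hx, sub_zero, add_zero]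
  have hint : Integrable (fun x => |p x - q x|) μ :=
    (hp.abs.add (hδs.integrable_indicator hs)).mono' (hp.aestronglyMeasurable.sub hq).norm
      (.of_forall fun x => by simpa only [Real.norm_eq_abs, abs_abs, Pi.add_apply] using hdom x)
  have hinside : ∫ x in s, |p x - q x| ∂μ ≤ δ * μ.real s := by
    calc ∫ x in s, |p x - q x| ∂μ ≤ ∫ _ in s, δ ∂μ :=
          setIntegral_mono_on hint.integrableOn hδs hs hδ
      _ = δ * μ.real s := by rw [setIntegral_const, smul_eq_mul, mul_comm]
  have houtside : ∫ x in sᶜ, |p x - q x| ∂μ = ∫ x in sᶜ, |p x| ∂μ :=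
    setIntegral_congr_fun hs.compl fun x hx => by rw [hq0 x hx, sub_zero]
  rw [← integral_add_compl hs hint, houtside]
  linarith

lemma ofReal_setIntegral_eq_withDensity_apply {p : α → ℝ} (hp0 : ∀ x, 0 ≤ p x)
    (hp : Integrable p μ) {s : Set α} (hs : MeasurableSet s) :
    ENNReal.ofReal (∫ x in s, p x ∂μ) = μ.withDensity (fun x => ENNReal.ofReal (p x)) s := by
  rw [withDensity_apply _ hs]
  exact ofReal_integral_eq_lintegral_ofReal hp.integrableOn (.of_forall hp0)

end Average

lemma abs_sub_intervalAverage_le_of_lipschitz {f : ℝ → ℝ} {ℓ u v : ℝ} (huv : u < v)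
    (hf : IntegrableOn f (Ico u v)) (hℓ : 0 ≤ ℓ) (hlip : ∀ a b, |f a - f b| ≤ ℓ * |a - b|)
    {x : ℝ} (hx : x ∈ Ico u v) :
    |f x - (v - u)⁻¹ * ∫ t in Ico u v, f t| ≤ ℓ * (v - u) := by
  have havg : (v - u)⁻¹ * ∫ t in Ico u v, f t = ⨍ t in Ico u v, f t := by
    rw [setAverage_eq, Real.volume_real_Ico_of_le huv.le, smul_eq_mul]
  rw [havg]
  refine abs_sub_setAverage_le measurableSet_Ico (by simp [huv]) (by simp) hf fun t ht => ?_
  refine (hlip x t).trans (mul_le_mul_of_nonneg_left ?_ hℓ)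
  exact abs_sub_le_iff.2 ⟨by linarith [hx.2, ht.1], by linarith [hx.1, ht.2]⟩

lemma mem_Ico_floor_div (c b x : ℝ) (hb : 0 < b) :
    x ∈ Ico (c + ⌊(x - c) / b⌋ * b) (c + (⌊(x - c) / b⌋ + 1) * b) := by
  have hlo := (le_div_iff₀ hb).1 (Int.floor_le ((x - c) / b))
  have hhi := (div_lt_iff₀ hb).1 (Int.lt_floor_add_one ((x - c) / b))
  constructor <;> linarith

lemma abs_sub_bucketAverage_le_of_lipschitz {f : ℝ → ℝ} {ℓ b : ℝ} (hb : 0 < b)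
    (hf : Integrable f) (hℓ : 0 ≤ ℓ) (hlip : ∀ a b, |f a - f b| ≤ ℓ * |a - b|) (c x : ℝ) :
    |f x - (1 / b) * ∫ t in Ico (c + ⌊(x - c) / b⌋ * b) (c + (⌊(x - c) / b⌋ + 1) * b), f t|
      ≤ ℓ * b := by
  have hmem := mem_Ico_floor_div c b x hb
  have hlen : c + ((⌊(x - c) / b⌋ : ℝ) + 1) * b - (c + ⌊(x - c) / b⌋ * b) = b := by ring
  have := abs_sub_intervalAverage_le_of_lipschitz (by linarith [hmem.1, hmem.2])
    hf.integrableOn hℓ hlip hmem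
  rwa [hlen, ← one_div] at this

lemma setIntegral_compl_Icc_le_of_tail {p : ℝ → ℝ} (hp0 : ∀ x, 0 ≤ p x) (hp : Integrable p)
    {T r : ℝ} (hr : 0 ≤ r)
    (htail : volume.withDensity (fun x => ENNReal.ofReal (p x)) {x | T ≤ |x|} ≤ ENNReal.ofReal r) :
    ∫ x in (Icc (-T) T)ᶜ, p x ≤ r := by
  have hsub : (Icc (-T) T)ᶜ ⊆ {x | T ≤ |x|} := by
    intro x hx
    rw [mem_compl_iff, mem_Icc, ← abs_le, not_le] at hx
    exact hx.le
  rw [← ENNReal.ofReal_le_ofReal_iff hr,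
    ofReal_setIntegral_eq_withDensity_apply hp0 hp measurableSet_Icc.compl]
  exact (measure_mono hsub).trans htail

lemma two_mul_exp_neg_sq_div_sq_eq {σ ε : ℝ} (hσ : σ ≠ 0) (hε0 : 0 < ε) (hε2 : ε ≤ 2) :
    2 * Real.exp (-(σ * Real.sqrt (Real.log (2 / ε))) ^ 2 / σ ^ 2) = ε := by
  have hlog : 0 ≤ Real.log (2 / ε) := Real.log_nonneg ((le_div_iff₀ hε0).2 (by linarith))
  rw [mul_pow, Real.sq_sqrt hlog, neg_div, mul_div_cancel_left₀ _ (pow_ne_zero 2 hσ),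
    Real.exp_neg, Real.exp_log (by positivity), inv_div]
  field_simp

/-- there is an absolute constant `c > 0` such that for any probability
measure `μ` on ℝ with ℓ-Lipschitz density `p` satisfying the σ-sub-Gaussian tail bound,
choosing bucket width `b = c·ε/(σ·ℓ·√(log(2/ε)))` and truncation `T = σ·√(log(2/ε))`, the
piecewise-constant bucketed density (bucket averages inside `[−T,T]`, zero outside)
approximates `p` within `ε` in total variation: `(1/2)∫|p − p_b| ≤ ε`. -/
theorem tv_bucket_width_subGaussian :
    ∃ c : ℝ, 0 < c ∧
      ∀ (μ : Measure ℝ), IsProbabilityMeasure μ →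
      ∀ (p : ℝ → ℝ), (∀ x, 0 ≤ p x) → Integrable p →
      μ = MeasureTheory.volume.withDensity (fun x => ENNReal.ofReal (p x)) →
      ∀ (ℓ σ ε : ℝ), 0 < ℓ → 0 < σ → ε ∈ Set.Ioo (0 : ℝ) 1 →
      (∀ a b' : ℝ, |p a - p b'| ≤ ℓ * |a - b'|) →
      (∀ t : ℝ, 0 ≤ t →
        μ {x | t ≤ |x|} ≤ ENNReal.ofReal (2 * Real.exp (-t ^ 2 / σ ^ 2))) →
      ∀ (b T : ℝ),
        b = c * ε / (σ * ℓ * Real.sqrt (Real.log (2 / ε))) →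
        T = σ * Real.sqrt (Real.log (2 / ε)) →
        ∀ (pb : ℝ → ℝ),
          (∀ x : ℝ, pb x =
            if |x| ≤ T then
              (1 / b) * ∫ t in Set.Ico (-T + (⌊(x + T) / b⌋ : ℝ) * b)
                                        (-T + ((⌊(x + T) / b⌋ : ℝ) + 1) * b), p t
            else 0) →
          (1 / 2) * (∫ x, |p x - pb x|) ≤ ε := by
  refine ⟨1 / 2, by norm_num, ?_⟩
  rintro μ - p hp0 hp rfl ℓ σ ε hℓ hσ ⟨hε0, hε1⟩ hlip htail b T hb hT pb hpb
  have hlog : 0 < Real.log (2 / ε) := Real.log_pos ((lt_div_iff₀ hε0).2 (by linarith))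
  have hTpos : 0 < T := hT ▸ by positivity
  have hbpos : 0 < b := hb ▸ by positivity
  have hwidth : ℓ * b * (2 * T) = ε := by
    rw [hb, hT]; field_simp
  have hbucket : ∀ x ∈ Icc (-T) T, |p x - pb x| ≤ ℓ * b := by
    intro x hx
    rw [hpb, if_pos (abs_le.2 hx)]
    simpa only [sub_neg_eq_add] using
      abs_sub_bucketAverage_le_of_lipschitz hbpos hp hℓ.le hlip (-T) x
  have hpb_zero : ∀ x ∉ Icc (-T) T, pb x = 0 := fun x hx => by
    rw [hpb, if_neg (by rwa [abs_le, ← mem_Icc])]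
  have hpb_meas : Measurable pb := by
    have hbucketAvg := Measurable.comp
      (g := fun k : ℤ => (1 / b) * ∫ t in Ico (-T + k * b) (-T + (k + 1) * b), p t)
      (measurable_of_countable _) ((measurable_id.add_const T).div_const b).floor
    rw [funext hpb]
    exact .ite (measurableSet_le measurable_abs measurable_const) hbucketAvg measurable_const
  have htail_mass : ∫ x in (Icc (-T) T)ᶜ, |p x| ≤ ε := by
    simp_rw [abs_of_nonneg (hp0 _)]
    refine setIntegral_compl_Icc_le_of_tail hp0 hp hε0.le ?_
    rw [← two_mul_exp_neg_sq_div_sq_eq hσ.ne' hε0 (by linarith), ← hT]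
    exact htail T hTpos.le
  calc (1 / 2) * ∫ x, |p x - pb x|
      ≤ (1 / 2) * (ℓ * b * volume.real (Icc (-T) T) + ∫ x in (Icc (-T) T)ᶜ, |p x|) := by
        gcongr
        exact integral_abs_sub_le_of_abs_sub_le_on measurableSet_Icc (by simp) hp
          hpb_meas.aestronglyMeasurable hpb_zero hbucket
    _ ≤ (1 / 2) * (ε + ε) := by
        rw [Real.volume_real_Icc_of_le (by linarith)]
        gcongr
        linarith
    _ = ε := by ring
end

section
/- Let f : ℝ → [0,1] be a nondecreasing CDF and define the pseudoinverse Q⁻¹(r) = inf{x : f(x) ≥ r} for r ∈ [0,1]. If two CDFs Q_μ, Q_ν of measures μ, ν on ℝ coincide at the midpoints of every bucket of width b (i.e., Q_μ(m_i) = Q_ν(m_i) for the midpoint m_i of each bucket), and both measures are supported on the same bucket partition structure, then sup_{r ∈ (0,1)} |Q_μ⁻¹(r) − Q_ν⁻¹(r)| ≤ b. -/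
/-! Every interval `[x, x + b]` contains a bucket midpoint `m`. If `Q_ν x ≥ r`, then
`Q_μ m = Q_ν m ≥ Q_ν x ≥ r`, so `Q_μ⁻¹ r ≤ m ≤ x + b`; taking the infimum over `x` gives
`Q_μ⁻¹ r ≤ Q_ν⁻¹ r + b`, and symmetrically. -/

open MeasureTheory ProbabilityTheory Filter

lemma exists_bucket_midpoint_mem_Icc (x₀ : ℝ) {b : ℝ} (hb : 0 < b) (x : ℝ) :
    ∃ i : ℤ, x ≤ x₀ + (i + 1 / 2) * b ∧ x₀ + (i + 1 / 2) * b ≤ x + b := by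
  set i := ⌈(x - x₀) / b - 1 / 2⌉
  have hcb : (x - x₀) / b * b = x - x₀ := div_mul_cancel₀ _ hb.ne'
  have hlo : (x - x₀) / b - 1 / 2 ≤ i := Int.le_ceil _
  have hhi : (i : ℝ) < (x - x₀) / b - 1 / 2 + 1 := Int.ceil_lt_add_one _
  exact ⟨i, by nlinarith, by nlinarith⟩

lemma csInf_setOf_le_le_csInf_add {F G : ℝ → ℝ} (hG : Monotone G) {r b : ℝ}
    (hF : BddBelow {x | r ≤ F x}) (hGne : {x | r ≤ G x}.Nonempty)
    (hnet : ∀ x, ∃ m, x ≤ m ∧ m ≤ x + b ∧ F m = G m) :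
    sInf {x | r ≤ F x} ≤ sInf {x | r ≤ G x} + b := by
  rw [← sub_le_iff_le_add]
  refine le_csInf hGne fun x hx => ?_
  obtain ⟨m, hxm, hmx, hFG⟩ := hnet x
  have hm : r ≤ F m := hFG ▸ hx.trans (hG hxm)
  linarith [csInf_le hF hm]

lemma bddBelow_setOf_le_cdf (μ : Measure ℝ) [IsProbabilityMeasure μ] {r : ℝ} (hr : 0 < r) :
    BddBelow {x | r ≤ cdf μ x} := by
  obtain ⟨y, hy⟩ := ((tendsto_cdf_atBot μ).eventually (eventually_lt_nhds hr)).exists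
  refine ⟨y, fun x hx => le_of_not_gt fun hxy => ?_⟩
  exact (hx.trans (monotone_cdf μ hxy.le)).not_gt hy

lemma nonempty_setOf_le_cdf (μ : Measure ℝ) [IsProbabilityMeasure μ] {r : ℝ} (hr : r < 1) :
    {x | r ≤ cdf μ x}.Nonempty :=
  ((tendsto_cdf_atTop μ).eventually (eventually_ge_nhds hr)).exists

/-- if the CDFs of two probability measures `μ, ν` on ℝ coincide at the
midpoints `m_i = x₀ + (i + 1/2)·b` of every bucket of width `b`, then their pseudoinverses
`Q⁻¹(r) = inf{x : Q x ≥ r}` differ by at most `b` for every `r ∈ (0,1)`. -/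
theorem pseudoinverse_close_of_cdf_eq_at_midpoints
    (μ ν : Measure ℝ) [IsProbabilityMeasure μ] [IsProbabilityMeasure ν]
    (x₀ b : ℝ) (hb : 0 < b)
    (hmid : ∀ i : ℤ, cdf μ (x₀ + (i + 1 / 2) * b) = cdf ν (x₀ + (i + 1 / 2) * b)) :
    ∀ r ∈ Set.Ioo (0 : ℝ) 1,
      |sInf {x : ℝ | r ≤ cdf μ x} - sInf {x : ℝ | r ≤ cdf ν x}| ≤ b := by
  rintro r ⟨hr0, hr1⟩
  have hnet : ∀ x, ∃ m, x ≤ m ∧ m ≤ x + b ∧ cdf μ m = cdf ν m := fun x => by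
    obtain ⟨i, hxm, hmx⟩ := exists_bucket_midpoint_mem_Icc x₀ hb x
    exact ⟨_, hxm, hmx, hmid i⟩
  have hμν := csInf_setOf_le_le_csInf_add (monotone_cdf ν) (bddBelow_setOf_le_cdf μ hr0)
    (nonempty_setOf_le_cdf ν hr1) hnet
  have hνμ := csInf_setOf_le_le_csInf_add (monotone_cdf μ) (bddBelow_setOf_le_cdf ν hr0)
    (nonempty_setOf_le_cdf μ hr1) fun x => (hnet x).imp fun _ ⟨h₁, h₂, h₃⟩ => ⟨h₁, h₂, h₃.symm⟩
  rw [abs_sub_le_iff]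
  constructor <;> linarith
end
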